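/- Let d ≥ 2. The set of clopen tuples of ℒ∨(𝕀)^{couples(d)}, ordered pointwise, is a lattice: any two clopen tuples f, g have a least upper bound and a greatest lower bound within the set of clopen tuples. -/
import Mathlib


noncomputable section

instance : Fact ((0:ℝ) ≤ 1) := ⟨zero_le_one⟩

/-- `𝕀` is the real unit interval `[0,1]`, a complete lattice. -/
notation "𝕀" => unitInterval

/-- `f^∧(x) = ⨅_{x < x'} f x'`, the meet-continuous closure data of `f`. -/
def mCl (f : 𝕀 → 𝕀) : 𝕀 → 𝕀 :=
  fun x => ⨅ y : {y : 𝕀 // x < y}, f y.1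

/-- `f^∨(x) = ⨆_{x' < x} f x'`, the join-continuous closure data of `f`. -/
def jCl (f : 𝕀 → 𝕀) : 𝕀 → 𝕀 :=
  fun x => ⨆ y : {y : 𝕀 // y.1 < x}, f y.1

/-- `f` is join-continuous: it preserves all suprema. -/
def JoinCont (f : 𝕀 → 𝕀) : Prop :=
  ∀ S : Set 𝕀, f (sSup S) = ⨆ x ∈ S, f x

/-- `f` is meet-continuous: it preserves all infima. -/
def MeetCont (f : 𝕀 → 𝕀) : Prop :=
  ∀ S : Set 𝕀, f (sInf S) = ⨅ x ∈ S, f x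

/-- The right adjoint `f^ρ` of a join-continuous `f`. -/
def radj (f : 𝕀 → 𝕀) : 𝕀 → 𝕀 := fun y => sSup {x | f x ≤ y}

/-- The left adjoint `g^λ` of a meet-continuous `g`. -/
def ladj (g : 𝕀 → 𝕀) : 𝕀 → 𝕀 := fun y => sInf {x | y ≤ g x}

/-- `f* := (f^ρ)^∨`. -/
def starF (f : 𝕀 → 𝕀) : 𝕀 → 𝕀 := jCl (radj f)

/-- `f ⊗ g := g ∘ f`. -/
def otimes (f g : 𝕀 → 𝕀) : 𝕀 → 𝕀 := g ∘ f

/-- `f ⊕ g := (g^∧ ∘ f^∧)^∨`. -/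
def oplus (f g : 𝕀 → 𝕀) : 𝕀 → 𝕀 := jCl (mCl g ∘ mCl f)

/-- A tuple is closed if `f_{i,j} ⊗ f_{j,k} ≤ f_{i,k}` for `i < j < k`. -/
def ClosedT (d : ℕ) (f : Fin d → Fin d → (𝕀 → 𝕀)) : Prop :=
  ∀ i j k : Fin d, i < j → j < k → ∀ x, otimes (f i j) (f j k) x ≤ f i k x

/-- A tuple is open if `f_{i,k} ≤ f_{i,j} ⊕ f_{j,k}` for `i < j < k`. -/
def OpenT (d : ℕ) (f : Fin d → Fin d → (𝕀 → 𝕀)) : Prop :=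
  ∀ i j k : Fin d, i < j → j < k → ∀ x, f i k x ≤ oplus (f i j) (f j k) x

/-- Pointwise order on the meaningful (`i < j`) entries of tuples. -/
def TLE (d : ℕ) (f g : Fin d → Fin d → (𝕀 → 𝕀)) : Prop :=
  ∀ i j : Fin d, i < j → ∀ x, f i j x ≤ g i j x

/-- Each meaningful entry of the tuple is join-continuous. -/
def TupleJC (d : ℕ) (f : Fin d → Fin d → (𝕀 → 𝕀)) : Prop :=
  ∀ i j : Fin d, i < j → JoinCont (f i j)

/-- `⊕`-value of a subdivision `ℓ₀ < ℓ₁ < … < ℓ_k`: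
`f_{ℓ₀,ℓ₁} ⊕ f_{ℓ₁,ℓ₂} ⊕ … ⊕ f_{ℓ_{k-1},ℓ_k}`. -/
def oplusChain {d : ℕ} (f : Fin d → Fin d → (𝕀 → 𝕀)) : List (Fin d) → (𝕀 → 𝕀)
  | [] => id
  | [_] => id
  | a :: b :: l => oplus (f a b) (oplusChain f (b :: l))

/-- Subdivisions of the interval `[i,j]`: strictly increasing lists from `i` to `j`. -/
def Subdiv (d : ℕ) (i j : Fin d) : Set (List (Fin d)) :=
  {L | L.Chain' (· < ·) ∧ L.head? = some i ∧ L.getLast? = some j}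

/-- The interior of a tuple: `interior(f)_{i,j}` is the infimum, over all subdivisions
`i = ℓ₀ < ℓ₁ < … < ℓ_k = j`, of `f_{ℓ₀,ℓ₁} ⊕ … ⊕ f_{ℓ_{k-1},ℓ_k}`. -/
def interiorT (d : ℕ) (f : Fin d → Fin d → (𝕀 → 𝕀)) : Fin d → Fin d → (𝕀 → 𝕀) :=
  fun i j => ⨅ L : Subdiv d i j, oplusChain f L.1

/-- The chain `C_f ⊆ 𝕀²` associated to a monotone `f : 𝕀 → 𝕀`. -/
def Cf2 (f : 𝕀 → 𝕀) : Set (𝕀 × 𝕀) :=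
  {p | jCl f p.1 ≤ p.2 ∧ p.2 ≤ mCl f p.1}

/-- `f_C^-(x) = ⨅ {y | (x,y) ∈ C}`. -/
def fCm (C : Set (𝕀 × 𝕀)) : 𝕀 → 𝕀 := fun x => sInf {y | (x, y) ∈ C}

/-- `f_C^+(x) = ⨆ {y | (x,y) ∈ C}`. -/
def fCp (C : Set (𝕀 × 𝕀)) : 𝕀 → 𝕀 := fun x => sSup {y | (x, y) ∈ C}

/-- Compatibility of a (fully extended) tuple: `f_{j,k} ∘ f_{i,j} ≤ f_{i,k}` for all `i,j,k`. -/
def Compatible (d : ℕ) (f : Fin d → Fin d → (𝕀 → 𝕀)) : Prop :=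
  ∀ i j k : Fin d, ∀ x, f j k (f i j x) ≤ f i k x

/-- The subset `C_f ⊆ 𝕀^d` associated to a compatible tuple. -/
def Cfd (d : ℕ) (f : Fin d → Fin d → (𝕀 → 𝕀)) : Set (Fin d → 𝕀) :=
  {x | ∀ i j : Fin d, f i j (x i) ≤ x j}

/-- `v(C)_{i,j}(x) = ⨅ {c_j | c ∈ C, c_i = x}`. -/
def vC (d : ℕ) (C : Set (Fin d → 𝕀)) (i j : Fin d) : 𝕀 → 𝕀 :=
  fun x => sInf {z | ∃ c ∈ C, c i = x ∧ c j = z}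

/-- Canonical extension of a tuple given on `i < j` to all pairs:
identity on the diagonal and `f_{j,i} := (f_{i,j})*` below it. -/
def extT (d : ℕ) (g : Fin d → Fin d → (𝕀 → 𝕀)) : Fin d → Fin d → (𝕀 → 𝕀) :=
  fun i j => if i < j then g i j else if j < i then starF (g j i) else id

/-- The one-step function `h_{x,y}`. -/
def oneStep (x y : 𝕀) : 𝕀 → 𝕀 := fun t => if t ≤ x then 0 else y


-- ### order basics in 𝕀
lemma lt_sSup' {a : 𝕀} {s : Set 𝕀} (h : a < sSup s) : ∃ b ∈ s, a < b := by
  by_contra hc; push_neg at hc; exact absurd (sSup_le hc) (not_le.mpr h)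
lemma lt_iSup' {ι : Sort*} {f : ι → 𝕀} {a : 𝕀} (h : a < ⨆ i, f i) : ∃ i, a < f i := by
  by_contra hc; push_neg at hc; exact absurd (iSup_le hc) (not_le.mpr h)
lemma iInf_lt' {ι : Sort*} {f : ι → 𝕀} {a : 𝕀} (h : ⨅ i, f i < a) : ∃ i, f i < a := by
  by_contra hc; push_neg at hc; exact absurd (le_iInf hc) (not_le.mpr h)
lemma sSup_lt_self (x : 𝕀) : sSup {y : 𝕀 | y < x} = x := by
  apply le_antisymm (sSup_le fun y hy => le_of_lt hy)
  by_contra hc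
  push_neg at hc
  obtain ⟨z, hz1, hz2⟩ := exists_between hc
  exact absurd (le_sSup (show z ∈ {y : 𝕀 | y < x} from hz2)) (not_le.mpr hz1)

-- ### monotonicity
lemma JoinCont.mono {f : 𝕀 → 𝕀} (hf : JoinCont f) : Monotone f := by
  intro a b hab
  have h := hf {a, b}
  rw [sSup_pair, sup_eq_right.mpr hab] at h
  rw [h]
  exact le_biSup f (by simp)

lemma mCl_le (f : 𝕀 → 𝕀) {x y : 𝕀} (h : x < y) : mCl f x ≤ f y :=
  iInf_le (fun z : {z : 𝕀 // x < z} => f z.1) ⟨y, h⟩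

lemma le_jCl (f : 𝕀 → 𝕀) {x y : 𝕀} (h : y < x) : f y ≤ jCl f x :=
  le_iSup (fun z : {z : 𝕀 // z.1 < x} => f z.1) ⟨y, h⟩

lemma mCl_mono (f : 𝕀 → 𝕀) : Monotone (mCl f) := by
  intro a b hab
  exact le_iInf fun y => mCl_le f (lt_of_le_of_lt hab y.2)

lemma jCl_mono (f : 𝕀 → 𝕀) : Monotone (jCl f) := by
  intro a b hab
  exact iSup_le fun y => le_iSup_of_le ⟨y.1, lt_of_lt_of_le y.2 hab⟩ le_rfl

lemma mCl_le_mCl {f g : 𝕀 → 𝕀} (h : ∀ x, f x ≤ g x) : ∀ x, mCl f x ≤ mCl g x :=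
  fun _ => iInf_mono fun y => h y.1

lemma jCl_le_jCl {f g : 𝕀 → 𝕀} (h : ∀ x, f x ≤ g x) : ∀ x, jCl f x ≤ jCl g x :=
  fun _ => iSup_mono fun y => h y.1

lemma le_mCl {f : 𝕀 → 𝕀} (hf : Monotone f) : ∀ x, f x ≤ mCl f x :=
  fun x => le_iInf fun y => hf (le_of_lt y.2)

lemma jCl_le {f : 𝕀 → 𝕀} (hf : Monotone f) : ∀ x, jCl f x ≤ f x :=
  fun x => iSup_le fun y => hf (le_of_lt y.2)

-- ### join continuity
lemma JoinCont.jCl_eq {f : 𝕀 → 𝕀} (hf : JoinCont f) : ∀ x, jCl f x = f x := by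
  intro x
  refine le_antisymm (jCl_le hf.mono x) ?_
  have h := hf {y : 𝕀 | y < x}
  rw [sSup_lt_self] at h
  rw [h]
  exact iSup₂_le fun y hy => le_iSup_of_le ⟨y, hy⟩ le_rfl

lemma jc_jCl (f : 𝕀 → 𝕀) : JoinCont (jCl f) := by
  intro S
  apply le_antisymm
  · apply iSup_le
    rintro ⟨y, hy⟩
    obtain ⟨b, hbS, hb⟩ := lt_sSup' hy
    exact le_iSup₂_of_le b hbS (le_iSup_of_le ⟨y, hb⟩ le_rfl)
  · exact iSup₂_le fun x hx => jCl_mono f (le_sSup hx)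

lemma JoinCont.iSup {f : 𝕀 → 𝕀} (hf : JoinCont f) {ι : Sort*} (g : ι → 𝕀) :
    f (⨆ i, g i) = ⨆ i, f (g i) := by
  have h := hf (Set.range g)
  rw [sSup_range] at h
  rw [h, iSup_range]

lemma jc_comp {f g : 𝕀 → 𝕀} (hf : JoinCont f) (hg : JoinCont g) : JoinCont (g ∘ f) := by
  intro S
  have h1 : f (sSup S) = sSup (f '' S) := by rw [hf S, ← sSup_image]
  show g (f (sSup S)) = _
  rw [h1, hg (f '' S), iSup_image]
  rfl

lemma jc_sup {f g : 𝕀 → 𝕀} (hf : JoinCont f) (hg : JoinCont g) :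
    JoinCont (fun x => f x ⊔ g x) := by
  intro S
  show f (sSup S) ⊔ g (sSup S) = _
  rw [hf S, hg S]
  apply le_antisymm
  · exact sup_le (iSup₂_mono fun x _ => le_sup_left) (iSup₂_mono fun x _ => le_sup_right)
  · exact iSup₂_le fun x hx => sup_le_sup (le_iSup₂_of_le x hx le_rfl) (le_iSup₂_of_le x hx le_rfl)

lemma jc_iSup_fam {ι : Sort*} {F : ι → (𝕀 → 𝕀)} (hF : ∀ i, JoinCont (F i)) :
    JoinCont (fun x => ⨆ i, F i x) := by
  intro S
  simp only [(hF _).iSup, fun i => (hF i) S]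
  rw [iSup_comm]
  apply iSup_congr
  intro x
  rw [iSup_comm]

-- ### oplus basics
lemma jc_oplus (f g : 𝕀 → 𝕀) : JoinCont (oplus f g) := jc_jCl _

lemma oplus_mono {f f' g g' : 𝕀 → 𝕀} (hf : ∀ x, f x ≤ f' x) (hg : ∀ x, g x ≤ g' x) :
    ∀ x, oplus f g x ≤ oplus f' g' x := by
  intro x
  apply iSup_mono
  rintro ⟨y, hy⟩
  calc mCl g (mCl f y) ≤ mCl g (mCl f' y) := mCl_mono g (mCl_le_mCl hf y)
    _ ≤ mCl g' (mCl f' y) := mCl_le_mCl hg _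

-- ### mix rule : f ⊗ g ≤ f ⊕ g
lemma mix {f g : 𝕀 → 𝕀} (hf : JoinCont f) (hg : JoinCont g) :
    ∀ x, otimes f g x ≤ oplus f g x := by
  intro x
  show g (f x) ≤ _
  rw [← hg.jCl_eq (f x)]
  apply iSup_le
  rintro ⟨t, ht⟩
  rw [← hf.jCl_eq x] at ht
  obtain ⟨⟨y, hyx⟩, hty⟩ := lt_iSup' ht
  have h1 : g t ≤ mCl g (mCl f y) :=
    calc g t ≤ g (f y) := hg.mono (le_of_lt hty)
      _ ≤ g (mCl f y) := hg.mono (le_mCl hf.mono y)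
      _ ≤ mCl g (mCl f y) := le_mCl hg.mono _
  exact le_trans h1 (le_jCl (mCl g ∘ mCl f) hyx)

-- ### linear distributivities
lemma distribA {f g h : 𝕀 → 𝕀} (hh : JoinCont h) :
    ∀ x, otimes h (oplus f g) x ≤ oplus (otimes h f) g x := by
  intro x
  show oplus f g (h x) ≤ _
  apply iSup_le
  rintro ⟨y, hy⟩
  rw [← hh.jCl_eq x] at hy
  obtain ⟨⟨z, hzx⟩, hz⟩ := lt_iSup' hy
  have h1 : mCl f y ≤ mCl (f ∘ h) z := by
    apply le_iInf
    rintro ⟨w, hw⟩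
    exact mCl_le f (lt_of_lt_of_le hz (hh.mono (le_of_lt hw)))
  exact le_trans (mCl_mono g h1) (le_jCl (mCl g ∘ mCl (otimes h f)) hzx)

lemma distribB {f g h : 𝕀 → 𝕀} (hh : JoinCont h) :
    ∀ x, otimes (oplus f g) h x ≤ oplus f (otimes g h) x := by
  intro x
  show h (oplus f g x) ≤ _
  rw [show oplus f g x = ⨆ y : {y : 𝕀 // y.1 < x}, mCl g (mCl f y.1) from rfl, hh.iSup]
  apply iSup_le
  rintro ⟨y, hy⟩
  have h1 : h (mCl g (mCl f y)) ≤ mCl (h ∘ g) (mCl f y) := by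
    apply le_iInf
    rintro ⟨s, hs⟩
    exact hh.mono (mCl_le g hs)
  exact le_trans h1 (le_jCl (mCl (otimes g h) ∘ mCl f) hy)

-- ### star
lemma starF_eq (f : 𝕀 → 𝕀) (x : 𝕀) : starF f x = sSup {u | f u < x} := by
  apply le_antisymm
  · apply iSup_le
    rintro ⟨y, hy⟩
    exact sSup_le fun u hu => le_sSup (lt_of_le_of_lt hu hy)
  · apply sSup_le
    intro u hu
    exact le_trans (le_sSup (show u ∈ {x | f x ≤ f u} from Set.mem_setOf_eq ▸ le_refl (f u))) (le_jCl (radj f) hu)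

lemma jc_starF (f : 𝕀 → 𝕀) : JoinCont (starF f) := jc_jCl _

lemma starF_anti {f g : 𝕀 → 𝕀} (h : ∀ x, f x ≤ g x) : ∀ x, starF g x ≤ starF f x := by
  intro x
  rw [starF_eq, starF_eq]
  exact sSup_le_sSup fun u hu => lt_of_le_of_lt (h u) hu

lemma starF_starF {f : 𝕀 → 𝕀} (hf : JoinCont f) : ∀ x, starF (starF f) x = f x := by
  intro x
  rw [starF_eq]
  apply le_antisymm
  · apply sSup_le
    intro u hu
    have hu' : starF f u < x := hu
    rw [starF_eq] at hu'
    by_contra hc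
    push_neg at hc
    have h1 : sSup {y : 𝕀 | y < x} ≤ sSup {v | f v < u} :=
      sSup_le_sSup fun v hv => lt_of_le_of_lt (hf.mono (le_of_lt hv)) hc
    rw [sSup_lt_self] at h1
    exact absurd hu' (not_lt.mpr h1)
  · have key : ∀ u, u < f x → u ∈ {u | starF f u < x} := by
      intro u hu
      show starF f u < x
      rw [starF_eq]
      set s := sSup {v | f v < u} with hs
      have hfs : f s ≤ u := by
        rw [← hf.jCl_eq s]
        apply iSup_le
        rintro ⟨v, hv⟩
        obtain ⟨v', hv', hvv'⟩ := lt_sSup' hv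
        exact le_trans (hf.mono (le_of_lt hvv')) (le_of_lt hv')
      by_contra hc
      push_neg at hc
      exact absurd (hf.mono hc) (not_le.mpr (lt_of_le_of_lt hfs hu))
    calc f x = sSup {u : 𝕀 | u < f x} := (sSup_lt_self (f x)).symm
      _ ≤ _ := sSup_le_sSup key

lemma starF_oplus (f g : 𝕀 → 𝕀) : ∀ x, starF (oplus f g) x = starF f (starF g x) := by
  intro t
  rw [starF_eq, starF_eq]
  apply le_antisymm
  · apply sSup_le
    intro u hu
    apply le_of_forall_lt
    intro u' hu'
    have h1 : mCl g (mCl f u') < t := lt_of_le_of_lt (le_jCl (mCl g ∘ mCl f) hu') hu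
    obtain ⟨⟨v, hv1⟩, hv2⟩ := iInf_lt' h1
    obtain ⟨⟨w, hw1⟩, hw2⟩ := iInf_lt' hv1
    have hw3 : f w < starF g t := by
      rw [starF_eq]
      exact lt_of_lt_of_le hw2 (le_sSup hv2)
    exact lt_of_lt_of_le hw1 (le_sSup hw3)
  · apply sSup_le
    intro u hu
    rw [starF_eq] at hu
    obtain ⟨v, hv, huv⟩ := lt_sSup' hu
    apply le_sSup
    show oplus f g u < t
    have h1 : oplus f g u ≤ g v := by
      apply iSup_le
      rintro ⟨y, hy⟩
      have h2 : mCl f y < v := lt_of_le_of_lt (mCl_le f hy) huv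
      exact mCl_le g h2
    exact lt_of_le_of_lt h1 hv

lemma starF_otimes {f g : 𝕀 → 𝕀} (hf : JoinCont f) (hg : JoinCont g) :
    ∀ x, starF (otimes f g) x = oplus (starF g) (starF f) x := by
  intro x
  have h1 : ∀ y, starF (oplus (starF g) (starF f)) y = otimes f g y := by
    intro y
    rw [starF_oplus, starF_starF hg, starF_starF hf]
    rfl
  have h2 : ∀ y, starF (starF (oplus (starF g) (starF f))) y = starF (otimes f g) y := by
    intro y
    rw [starF_eq, starF_eq]
    congr 1
    ext u
    simp only [Set.mem_setOf_eq, h1]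
  rw [← h2 x]
  exact starF_starF (jc_oplus (starF g) (starF f)) x

-- ### paths
inductive IPath (d : ℕ) : Fin d → Fin d → Type where
  | single : ∀ {i j : Fin d}, i < j → IPath d i j
  | cons : ∀ {i j k : Fin d}, i < j → IPath d j k → IPath d i k

def pComp {d : ℕ} (h : Fin d → Fin d → (𝕀 → 𝕀)) : ∀ {i j : Fin d}, IPath d i j → (𝕀 → 𝕀)
  | i, j, .single _ => h i j
  | _, k, .cons (i := i) (j := j) _ p => pComp h p ∘ h i j

def IPath.append {d : ℕ} : ∀ {i j k : Fin d}, IPath d i j → IPath d j k → IPath d i k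
  | _, _, _, .single hij, q => .cons hij q
  | _, _, _, .cons hab p, q => .cons hab (p.append q)

lemma pComp_append {d : ℕ} (h : Fin d → Fin d → (𝕀 → 𝕀)) :
    ∀ {i j k : Fin d} (p : IPath d i j) (q : IPath d j k) (x : 𝕀),
      pComp h (p.append q) x = pComp h q (pComp h p x) := by
  intro i j k p q x
  induction p generalizing x with
  | single hij => rfl
  | cons hab p ih => exact ih q _

lemma pComp_jc {d : ℕ} {h : Fin d → Fin d → (𝕀 → 𝕀)} (hjc : TupleJC d h) :
    ∀ {i j : Fin d} (p : IPath d i j), JoinCont (pComp h p) := by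
  intro i j p
  induction p with
  | single hij => exact hjc _ _ hij
  | cons hab p ih => exact jc_comp (hjc _ _ hab) ih

-- ### transitive closure
def TrCl (d : ℕ) (h : Fin d → Fin d → (𝕀 → 𝕀)) : Fin d → Fin d → (𝕀 → 𝕀) :=
  fun i j x => ⨆ p : IPath d i j, pComp h p x

lemma le_TrCl {d : ℕ} (h : Fin d → Fin d → (𝕀 → 𝕀)) : TLE d h (TrCl d h) := by
  intro i j hij x
  exact le_iSup (fun p : IPath d i j => pComp h p x) (.single hij)

lemma pComp_le_TrCl {d : ℕ} (h : Fin d → Fin d → (𝕀 → 𝕀)) {i j : Fin d} (p : IPath d i j)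
    (x : 𝕀) : pComp h p x ≤ TrCl d h i j x :=
  le_iSup (fun p : IPath d i j => pComp h p x) p

lemma TrCl_jc {d : ℕ} {h : Fin d → Fin d → (𝕀 → 𝕀)} (hjc : TupleJC d h) :
    ∀ i j : Fin d, JoinCont (TrCl d h i j) := by
  intro i j
  exact jc_iSup_fam (fun p => pComp_jc hjc p)

lemma TrCl_trans {d : ℕ} {h : Fin d → Fin d → (𝕀 → 𝕀)} (hjc : TupleJC d h)
    (i j k : Fin d) (x : 𝕀) : TrCl d h j k (TrCl d h i j x) ≤ TrCl d h i k x := by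
  rw [show TrCl d h i j x = ⨆ p : IPath d i j, pComp h p x from rfl,
    (TrCl_jc hjc j k).iSup]
  apply iSup_le
  intro p
  rw [show TrCl d h j k (pComp h p x) = ⨆ q : IPath d j k, pComp h q (pComp h p x) from rfl]
  apply iSup_le
  intro q
  rw [← pComp_append h p q x]
  exact pComp_le_TrCl h _ x

lemma TrCl_closed {d : ℕ} {h : Fin d → Fin d → (𝕀 → 𝕀)} (hjc : TupleJC d h) :
    ClosedT d (TrCl d h) := by
  intro i j k _ _ x
  exact TrCl_trans hjc i j k x

lemma path_lt {d : ℕ} : ∀ {i j : Fin d}, IPath d i j → i < j := by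
  intro i j p
  induction p with
  | single hij => exact hij
  | cons hab _ ih => exact lt_trans hab ih

lemma TrCl_least {d : ℕ} {h t : Fin d → Fin d → (𝕀 → 𝕀)} (hjc : TupleJC d t)
    (ht : ClosedT d t) (hle : TLE d h t) : TLE d (TrCl d h) t := by
  intro i j hij x
  apply iSup_le
  intro p
  clear hij
  induction p generalizing x with
  | single hij => exact hle _ _ hij x
  | @cons i a j hia p ih =>
    have haj : a < j := path_lt p
    show pComp h p (h i a x) ≤ t i j x
    calc pComp h p (h i a x) ≤ t a j (h i a x) := ih _
      _ ≤ t a j (t i a x) := (hjc a j haj).mono (hle _ _ hia x)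
      _ ≤ t i j x := ht i a j hia haj x

-- ### key lemma: the transitive closure of an open (join-continuous) tuple is open
lemma pComp_open_le {d : ℕ} {h : Fin d → Fin d → (𝕀 → 𝕀)} (hjc : TupleJC d h)
    (hop : OpenT d h) {a k : Fin d} (p : IPath d a k) :
    ∀ j : Fin d, a < j → j < k → ∀ x,
      pComp h p x ≤ oplus (TrCl d h a j) (TrCl d h j k) x := by
  induction p with
  | @single a k hak =>
    intro j haj hjk x
    calc h a k x ≤ oplus (h a j) (h j k) x := hop a j k haj hjk x
      _ ≤ oplus (TrCl d h a j) (TrCl d h j k) x :=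
        oplus_mono (le_TrCl h a j haj) (le_TrCl h j k hjk) x
  | @cons a b k hab p ih =>
    intro j haj hjk x
    show pComp h p (h a b x) ≤ _
    rcases lt_trichotomy b j with hbj | hbj | hbj
    · -- b < j : use ih at j, then distribA
      calc pComp h p (h a b x)
          ≤ oplus (TrCl d h b j) (TrCl d h j k) (h a b x) := ih j hbj hjk _
        _ = otimes (h a b) (oplus (TrCl d h b j) (TrCl d h j k)) x := rfl
        _ ≤ oplus (otimes (h a b) (TrCl d h b j)) (TrCl d h j k) x :=
            distribA (hjc a b hab) x
        _ ≤ oplus (TrCl d h a j) (TrCl d h j k) x := by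
            apply oplus_mono ?_ (fun y => le_refl _)
            intro y
            show TrCl d h b j (h a b y) ≤ TrCl d h a j y
            calc TrCl d h b j (h a b y) ≤ TrCl d h b j (TrCl d h a b y) :=
                  (TrCl_jc hjc b j).mono (le_TrCl h a b hab y)
              _ ≤ TrCl d h a j y := TrCl_trans hjc a b j y
    · -- b = j
      subst hbj
      have hbk : b < k := path_lt p
      calc pComp h p (h a b x) ≤ TrCl d h b k (h a b x) := pComp_le_TrCl h p _
        _ ≤ TrCl d h b k (TrCl d h a b x) := (TrCl_jc hjc b k).mono (le_TrCl h a b hab x)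
        _ = otimes (TrCl d h a b) (TrCl d h b k) x := rfl
        _ ≤ oplus (TrCl d h a b) (TrCl d h b k) x :=
            mix (TrCl_jc hjc a b) (TrCl_jc hjc b k) x
    · -- j < b : h a b ≤ h a j ⊕ h j b, then distribB
      calc pComp h p (h a b x)
          ≤ pComp h p (oplus (h a j) (h j b) x) :=
            (pComp_jc hjc p).mono (hop a j b haj hbj x)
        _ = otimes (oplus (h a j) (h j b)) (pComp h p) x := rfl
        _ ≤ oplus (h a j) (otimes (h j b) (pComp h p)) x := distribB (pComp_jc hjc p) x
        _ ≤ oplus (TrCl d h a j) (TrCl d h j k) x := by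
            apply oplus_mono (le_TrCl h a j haj)
            intro y
            show pComp h p (h j b y) ≤ TrCl d h j k y
            calc pComp h p (h j b y) ≤ TrCl d h b k (h j b y) := pComp_le_TrCl h p _
              _ ≤ TrCl d h b k (TrCl d h j b y) := (TrCl_jc hjc b k).mono (le_TrCl h j b hbj y)
              _ ≤ TrCl d h j k y := TrCl_trans hjc j b k y

lemma TrCl_open {d : ℕ} {h : Fin d → Fin d → (𝕀 → 𝕀)} (hjc : TupleJC d h)
    (hop : OpenT d h) : OpenT d (TrCl d h) := by
  intro i j k hij hjk x
  exact iSup_le fun p => pComp_open_le hjc hop p j hij hjk x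

-- ### the sup tuple
def supT (d : ℕ) (f g : Fin d → Fin d → (𝕀 → 𝕀)) : Fin d → Fin d → (𝕀 → 𝕀) :=
  fun i j x => f i j x ⊔ g i j x

lemma supT_jc {d : ℕ} {f g : Fin d → Fin d → (𝕀 → 𝕀)} (hf : TupleJC d f)
    (hg : TupleJC d g) : TupleJC d (supT d f g) :=
  fun i j hij => jc_sup (hf i j hij) (hg i j hij)

lemma supT_open {d : ℕ} {f g : Fin d → Fin d → (𝕀 → 𝕀)} (hf : OpenT d f)
    (hg : OpenT d g) : OpenT d (supT d f g) := by
  intro i j k hij hjk x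
  apply sup_le
  · exact le_trans (hf i j k hij hjk x)
      (oplus_mono (fun y => le_sup_left) (fun y => le_sup_left) x)
  · exact le_trans (hg i j k hij hjk x)
      (oplus_mono (fun y => le_sup_right) (fun y => le_sup_right) x)

-- ### the join of two clopen tuples
def joinT (d : ℕ) (f g : Fin d → Fin d → (𝕀 → 𝕀)) : Fin d → Fin d → (𝕀 → 𝕀) :=
  TrCl d (supT d f g)

-- ### duality
def DT (d : ℕ) (f : Fin d → Fin d → (𝕀 → 𝕀)) : Fin d → Fin d → (𝕀 → 𝕀) :=
  fun i j => starF (f j.rev i.rev)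

lemma DT_jc {d : ℕ} (f : Fin d → Fin d → (𝕀 → 𝕀)) : TupleJC d (DT d f) :=
  fun _ _ _ => jc_starF _

lemma DT_anti {d : ℕ} {f g : Fin d → Fin d → (𝕀 → 𝕀)} (h : TLE d f g) :
    TLE d (DT d g) (DT d f) := by
  intro i j hij x
  exact starF_anti (h j.rev i.rev (Fin.rev_lt_rev.mpr hij)) x

lemma DT_DT {d : ℕ} {f : Fin d → Fin d → (𝕀 → 𝕀)} (hf : TupleJC d f) {i j : Fin d}
    (hij : i < j) (x : 𝕀) : DT d (DT d f) i j x = f i j x := by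
  show starF (starF (f i.rev.rev j.rev.rev)) x = f i j x
  rw [Fin.rev_rev, Fin.rev_rev]
  exact starF_starF (hf i j hij) x

lemma DT_open_of_closed {d : ℕ} {f : Fin d → Fin d → (𝕀 → 𝕀)} (hjc : TupleJC d f)
    (hcl : ClosedT d f) : OpenT d (DT d f) := by
  intro i j k hij hjk x
  have h1 : k.rev < j.rev := Fin.rev_lt_rev.mpr hjk
  have h2 : j.rev < i.rev := Fin.rev_lt_rev.mpr hij
  calc DT d f i k x ≤ starF (otimes (f k.rev j.rev) (f j.rev i.rev)) x :=
        starF_anti (hcl k.rev j.rev i.rev h1 h2) x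
    _ = oplus (starF (f j.rev i.rev)) (starF (f k.rev j.rev)) x :=
        starF_otimes (hjc k.rev j.rev h1) (hjc j.rev i.rev h2) x
    _ = oplus (DT d f i j) (DT d f j k) x := rfl

lemma DT_closed_of_open {d : ℕ} {f : Fin d → Fin d → (𝕀 → 𝕀)} (hop : OpenT d f) :
    ClosedT d (DT d f) := by
  intro i j k hij hjk x
  have h1 : k.rev < j.rev := Fin.rev_lt_rev.mpr hjk
  have h2 : j.rev < i.rev := Fin.rev_lt_rev.mpr hij
  calc otimes (DT d f i j) (DT d f j k) x
      = starF (f k.rev j.rev) (starF (f j.rev i.rev) x) := rfl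
    _ = starF (oplus (f k.rev j.rev) (f j.rev i.rev)) x :=
        (starF_oplus (f k.rev j.rev) (f j.rev i.rev) x).symm
    _ ≤ starF (f k.rev i.rev) x := starF_anti (hop k.rev j.rev i.rev h1 h2) x
    _ = DT d f i k x := rfl

/-- the set of clopen tuples of `ℒ∨(𝕀)^{couples(d)}`, ordered pointwise,
is a lattice: any two clopen tuples have a least upper bound and a greatest lower
bound within the set of clopen tuples. -/
theorem statement9 (d : ℕ) (hd : 2 ≤ d) (f g : Fin d → Fin d → (𝕀 → 𝕀))
    (hf : TupleJC d f ∧ ClosedT d f ∧ OpenT d f)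
    (hg : TupleJC d g ∧ ClosedT d g ∧ OpenT d g) :
    (∃ s : Fin d → Fin d → (𝕀 → 𝕀), (TupleJC d s ∧ ClosedT d s ∧ OpenT d s) ∧
      TLE d f s ∧ TLE d g s ∧
      ∀ t : Fin d → Fin d → (𝕀 → 𝕀), (TupleJC d t ∧ ClosedT d t ∧ OpenT d t) →
        TLE d f t → TLE d g t → TLE d s t) ∧
    (∃ m : Fin d → Fin d → (𝕀 → 𝕀), (TupleJC d m ∧ ClosedT d m ∧ OpenT d m) ∧
      TLE d m f ∧ TLE d m g ∧
      ∀ t : Fin d → Fin d → (𝕀 → 𝕀), (TupleJC d t ∧ ClosedT d t ∧ OpenT d t) →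
        TLE d t f → TLE d t g → TLE d t m) := by
  obtain ⟨hfjc, hfcl, hfop⟩ := hf
  obtain ⟨hgjc, hgcl, hgop⟩ := hg
  constructor
  · -- join
    refine ⟨joinT d f g, ⟨fun i j _ => TrCl_jc (supT_jc hfjc hgjc) i j,
      TrCl_closed (supT_jc hfjc hgjc),
      TrCl_open (supT_jc hfjc hgjc) (supT_open hfop hgop)⟩, ?_, ?_, ?_⟩
    · intro i j hij x
      exact le_trans le_sup_left (le_TrCl (supT d f g) i j hij x)
    · intro i j hij x
      exact le_trans le_sup_right (le_TrCl (supT d f g) i j hij x)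
    · rintro t ⟨htjc, htcl, _⟩ hft hgt
      exact TrCl_least htjc htcl (fun i j hij x => sup_le (hft i j hij x) (hgt i j hij x))
  · -- meet, by duality
    set s' := joinT d (DT d f) (DT d g) with hs'
    have hDf : TupleJC d (DT d f) := DT_jc f
    have hDg : TupleJC d (DT d g) := DT_jc g
    have hsupjc := supT_jc hDf hDg
    have hs'jc : TupleJC d s' := fun i j _ => TrCl_jc hsupjc i j
    have hs'cl : ClosedT d s' := TrCl_closed hsupjc
    have hs'op : OpenT d s' :=
      TrCl_open hsupjc (supT_open (DT_open_of_closed hfjc hfcl) (DT_open_of_closed hgjc hgcl))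
    refine ⟨DT d s', ⟨DT_jc s', DT_closed_of_open hs'op, DT_open_of_closed hs'jc hs'cl⟩,
      ?_, ?_, ?_⟩
    · -- DT s' ≤ f
      have h1 : TLE d (DT d f) s' := fun i j hij x =>
        le_trans le_sup_left (le_TrCl (supT d (DT d f) (DT d g)) i j hij x)
      intro i j hij x
      exact le_trans (DT_anti h1 i j hij x) (le_of_eq (DT_DT hfjc hij x))
    · have h1 : TLE d (DT d g) s' := fun i j hij x =>
        le_trans le_sup_right (le_TrCl (supT d (DT d f) (DT d g)) i j hij x)
      intro i j hij x
      exact le_trans (DT_anti h1 i j hij x) (le_of_eq (DT_DT hgjc hij x))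
    · rintro t ⟨htjc, _, htop⟩ htf htg
      have hDt : TupleJC d (DT d t) := DT_jc t
      have hDtcl : ClosedT d (DT d t) := DT_closed_of_open htop
      have h1 : TLE d (supT d (DT d f) (DT d g)) (DT d t) := fun i j hij x =>
        sup_le (DT_anti htf i j hij x) (DT_anti htg i j hij x)
      have h2 : TLE d s' (DT d t) := TrCl_least hDt hDtcl h1
      intro i j hij x
      calc t i j x = DT d (DT d t) i j x := (DT_DT htjc hij x).symm
        _ ≤ DT d s' i j x := DT_anti h2 i j hij x


end
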